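/- arXiv:1106.0463 — 3 statements merged into one kernel-verified Lean document; each statement's English description precedes it below -/
import Mathlib

section
/- For every integer n ≥ 1 and x ∈ (0, π), the real-valued Mehler–Dirichlet formula P_n(cos x) = (2/π) ∫_0^x cos((n+1/2)t) / √(2(cos t − cos x)) dt holds. -/
open MeasureTheory Real intervalIntegral

/-- The `n`-th Legendre polynomial, via the Rodrigues formula. -/
noncomputable def legendre (n : ℕ) : Polynomial ℝ :=
  (1 / (2 ^ n * n.factorial) : ℝ) • (Polynomial.derivative^[n] ((Polynomial.X ^ 2 - 1) ^ n))

open Polynomial Set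

set_option maxHeartbeats 1000000


noncomputable def MDQ : ℕ → Polynomial ℝ
  | 0 => 1
  | 1 => 1 - 4 * Polynomial.X
  | (n+2) => 2 * (1 - 2 * Polynomial.X) * MDQ (n+1) - MDQ n

noncomputable def MDS : ℕ → Polynomial ℝ
  | 0 => 1
  | 1 => 3 - 4 * Polynomial.X
  | (n+2) => 2 * (1 - 2 * Polynomial.X) * MDS (n+1) - MDS n

lemma MDQ_eval (n : ℕ) (y : ℝ) :
    (MDQ (n+2)).eval y = 2 * (1 - 2*y) * (MDQ (n+1)).eval y - (MDQ n).eval y := by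
  simp [MDQ]

lemma MDS_eval (n : ℕ) (y : ℝ) :
    (MDS (n+2)).eval y = 2 * (1 - 2*y) * (MDS (n+1)).eval y - (MDS n).eval y := by
  simp [MDS]

lemma cos_eq_MDQ (n : ℕ) (θ : ℝ) :
    Real.cos ((2 * n + 1) * θ) = Real.cos θ * (MDQ n).eval (Real.sin θ ^ 2) := by
  induction n using Nat.twoStepInduction with
  | zero => simp [MDQ]
  | one =>
    have h3 : (2 * ((1:ℕ):ℝ) + 1) * θ = 2*θ + θ := by push_cast; ring
    rw [h3, Real.cos_add, Real.cos_two_mul, Real.sin_two_mul]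
    have h := Real.sin_sq_add_cos_sq θ
    simp only [MDS, MDQ]
    simp
    linear_combination (2*Real.cos θ) * h
  | more n ihn ihn1 =>
    have key : ∀ A B : ℝ, Real.cos (A + B) = 2 * Real.cos A * Real.cos B - Real.cos (A - B) := by
      intro A B; rw [Real.cos_add, Real.cos_sub]; ring
    push_cast at ihn ihn1 ⊢
    rw [show (2 * ((n:ℝ) + 2) + 1) * θ = (2*((n:ℝ)+1)+1)*θ + 2*θ by ring, key,
       show (2*((n:ℝ)+1)+1)*θ - 2*θ = (2*(n:ℝ)+1)*θ by ring, ihn, ihn1, Real.cos_two_mul,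
       MDQ_eval]
    have h := Real.sin_sq_add_cos_sq θ
    linear_combination (4*Real.cos θ * (MDQ (n+1)).eval (Real.sin θ^2)) * h

lemma sin_eq_MDS (n : ℕ) (θ : ℝ) :
    Real.sin ((2 * n + 1) * θ) = Real.sin θ * (MDS n).eval (Real.sin θ ^ 2) := by
  induction n using Nat.twoStepInduction with
  | zero => simp [MDS]
  | one =>
    have h3 : (2 * ((1:ℕ):ℝ) + 1) * θ = 2*θ + θ := by push_cast; ring
    rw [h3, Real.sin_add, Real.cos_two_mul, Real.sin_two_mul]
    have h := Real.sin_sq_add_cos_sq θ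
    simp only [MDS]
    simp
    linear_combination (4*Real.sin θ) * h
  | more n ihn ihn1 =>
    have key : ∀ A B : ℝ, Real.sin (A + B) = 2 * Real.sin A * Real.cos B - Real.sin (A - B) := by
      intro A B; rw [Real.sin_add, Real.sin_sub]; ring
    push_cast at ihn ihn1 ⊢
    rw [show (2 * ((n:ℝ) + 2) + 1) * θ = (2*((n:ℝ)+1)+1)*θ + 2*θ by ring, key,
       show (2*((n:ℝ)+1)+1)*θ - 2*θ = (2*(n:ℝ)+1)*θ by ring, ihn, ihn1, Real.cos_two_mul,
       MDS_eval]
    have h := Real.sin_sq_add_cos_sq θ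
    linear_combination (4*Real.sin θ * (MDS (n+1)).eval (Real.sin θ^2)) * h

lemma MD_idA (n : ℕ) (y : ℝ) :
    (MDQ n).eval y = (1 - 2*y) * (MDQ (n+1)).eval y + 2*y*(MDS (n+1)).eval y := by
  induction n using Nat.twoStepInduction with
  | zero => simp [MDQ, MDS]; ring
  | one =>
    show (MDQ 1).eval y = (1-2*y) * (MDQ 2).eval y + 2*y*(MDS 2).eval y
    rw [show (2:ℕ) = 0 + 2 from rfl, MDQ_eval, MDS_eval]
    simp [MDQ, MDS]; ring
  | more n ihn ihn1 =>
    rw [MDQ_eval n, MDQ_eval (n+1), MDS_eval (n+1)]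
    linear_combination 2*(1-2*y) * ihn1 - ihn

lemma MDS_deriv (n : ℕ) (y : ℝ) :
    (Polynomial.derivative (MDS (n+2))).eval y =
      2*(1-2*y) * (Polynomial.derivative (MDS (n+1))).eval y - 4 * (MDS (n+1)).eval y
        - (Polynomial.derivative (MDS n)).eval y := by
  rw [show MDS (n+2) = 2 * (1 - 2 * Polynomial.X) * MDS (n+1) - MDS n from rfl]
  simp [Polynomial.derivative_mul]
  ring

lemma MD_idB (n : ℕ) (y : ℝ) :
    (MDS n).eval y + 2*y*(Polynomial.derivative (MDS n)).eval y
      = (2*n+1) * (MDQ n).eval y := by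
  induction n using Nat.twoStepInduction with
  | zero => simp [MDQ, MDS]
  | one => simp [MDQ, MDS]; ring
  | more n ihn ihn1 =>
    rw [MDS_eval n, MDS_deriv n, MDQ_eval n]
    have hA := MD_idA n y
    push_cast at ihn ihn1 ⊢
    linear_combination 2*(1-2*y)*ihn1 - ihn + 4*hA

namespace MD

local notation "D" => Polynomial.derivative (R := ℝ)

noncomputable def f (n : ℕ) : Polynomial ℝ := (Polynomial.X ^ 2 - 1) ^ n
noncomputable def g (n : ℕ) : Polynomial ℝ := D^[n] (f n)

lemma legendre_eq (n : ℕ) : legendre n = (1 / (2 ^ n * n.factorial) : ℝ) • g n := rfl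

lemma Dit_add (m : ℕ) (p q : Polynomial ℝ) : D^[m] (p + q) = D^[m] p + D^[m] q := by
  induction m generalizing p q with
  | zero => simp
  | succ m ih => simp [Function.iterate_succ_apply, ih]

lemma Dit_natmul (m k : ℕ) (p : Polynomial ℝ) :
    D^[m] ((k : Polynomial ℝ) * p) = (k : Polynomial ℝ) * D^[m] p := by
  rw [← Polynomial.C_eq_natCast, Polynomial.iterate_derivative_C_mul]

lemma DitD (k : ℕ) (p : Polynomial ℝ) : D^[k] (D p) = D (D^[k] p) := by
  rw [← Function.iterate_succ_apply, Function.iterate_succ_apply']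

lemma leibnizX (m : ℕ) (p : Polynomial ℝ) :
    D^[m+1] (Polynomial.X * p)
      = Polynomial.X * D^[m+1] p + ((m+1 : ℕ) : Polynomial ℝ) * D^[m] p := by
  induction m generalizing p with
  | zero => simp [Polynomial.derivative_mul]; ring
  | succ m ih =>
    rw [Function.iterate_succ_apply (f := D) (n := m+1)]
    rw [show D (Polynomial.X * p) = p + Polynomial.X * D p by
      rw [Polynomial.derivative_mul]; simp]
    rw [Dit_add, ih (D p), ← Function.iterate_succ_apply (f := D),
      ← Function.iterate_succ_apply (f := D)]
    push_cast
    ring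

lemma f_deriv (n : ℕ) :
    D (f (n+1)) = ((2*(n+1) : ℕ) : Polynomial ℝ) * (Polynomial.X * f n) := by
  rw [f, Polynomial.derivative_pow_succ]
  simp [f, Polynomial.C_eq_natCast, map_ofNat]
  push_cast
  ring

lemma identityI (n : ℕ) :
    D (g (n+1)) = ((2*(n+1) : ℕ) : Polynomial ℝ) * (Polynomial.X * D (g n))
      + ((2*(n+1)*(n+1) : ℕ) : Polynomial ℝ) * g n := by
  have h0 := congrArg (D^[n+1]) (f_deriv n)
  rw [Dit_natmul, leibnizX n (f n)] at h0
  simp only [DitD, g, Function.iterate_succ_apply'] at h0 ⊢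
  push_cast at h0 ⊢
  linear_combination h0

lemma Xfderiv (n : ℕ) :
    Polynomial.X * D (f (n+1)) = ((2*(n+1) : ℕ) : Polynomial ℝ) * (f (n+1) + f n) := by
  rw [f_deriv n]
  have h : Polynomial.X ^ 2 * f n = f (n+1) + f n := by
    rw [f, f, pow_succ]; ring
  push_cast at h ⊢
  linear_combination (2*((n:Polynomial ℝ)+1)) * h

lemma identityII (n : ℕ) :
    Polynomial.X * D (g (n+1)) = ((n+1 : ℕ) : Polynomial ℝ) * g (n+1)
      + ((2*(n+1) : ℕ) : Polynomial ℝ) * D (g n) := by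
  have h0 := congrArg (D^[n+1]) (Xfderiv n)
  rw [Dit_natmul, Dit_add, leibnizX n (D (f (n+1)))] at h0
  simp only [DitD, g, Function.iterate_succ_apply'] at h0 ⊢
  push_cast at h0 ⊢
  linear_combination h0


lemma g_eval_one (m : ℕ) : (g m).eval 1 = 2^m * m.factorial := by
  have hf : f m = (Polynomial.X - Polynomial.C (1:ℝ))^m * (Polynomial.X + Polynomial.C (1:ℝ))^m := by
    rw [f, ← mul_pow]
    congr 1
    rw [Polynomial.C_1]
    ring
  rw [g, hf, Polynomial.iterate_derivative_mul]
  rw [Polynomial.eval_finset_sum]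
  rw [Finset.sum_eq_single 0]
  · simp only [Nat.choose_zero_right, one_smul, Nat.sub_zero, Function.iterate_zero_apply,
      Polynomial.iterate_derivative_X_sub_pow_self, smul_eq_mul, Polynomial.eval_mul]
    simp
    ring
  · intro k hk hk0
    rw [Polynomial.iterate_derivative_X_sub_pow]
    have hkm : m - (m - k) = k := by
      have : k ≤ m := Nat.lt_succ_iff.mp (Finset.mem_range.mp hk)
      omega
    simp [hkm, Polynomial.eval_pow, hk0]
  · intro h
    simp at h

lemma legendre_eval_one (m : ℕ) : (legendre m).eval 1 = 1 := by
  rw [legendre_eq, Polynomial.eval_smul, g_eval_one]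
  have h2 : (2:ℝ)^m ≠ 0 := by positivity
  have hf : (m.factorial : ℝ) ≠ 0 := by exact_mod_cast m.factorial_ne_zero
  rw [smul_eq_mul]
  field_simp

lemma a_rel (n : ℕ) : (1 / (2 ^ n * n.factorial) : ℝ)
    = 2*(n+1) * (1 / (2 ^ (n+1) * (n+1).factorial) : ℝ) := by
  have h2 : (2:ℝ)^(n+1) ≠ 0 := by positivity
  have hf : ((n+1).factorial : ℝ) ≠ 0 := by exact_mod_cast (n+1).factorial_ne_zero
  rw [Nat.factorial_succ]
  have hf2 : ((n).factorial : ℝ) ≠ 0 := by exact_mod_cast (n).factorial_ne_zero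
  field_simp
  push_cast
  ring

lemma evalI (n : ℕ) (y : ℝ) :
    (D (legendre (n+1))).eval y
      = y * (D (legendre n)).eval y + (n+1) * (legendre n).eval y := by
  have h := congrArg (Polynomial.eval y) (identityI n)
  simp only [Polynomial.eval_add, Polynomial.eval_mul, Polynomial.eval_natCast,
    Polynomial.eval_X] at h
  rw [legendre_eq, legendre_eq, Polynomial.derivative_smul, Polynomial.derivative_smul,
    Polynomial.eval_smul, Polynomial.eval_smul, Polynomial.eval_smul, smul_eq_mul,
    smul_eq_mul, smul_eq_mul, a_rel n]
  push_cast at h ⊢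
  linear_combination ((1 / (2 ^ (n+1) * (n+1).factorial) : ℝ)) * h

lemma evalII (n : ℕ) (y : ℝ) :
    y * (D (legendre (n+1))).eval y
      = (n+1) * (legendre (n+1)).eval y + (D (legendre n)).eval y := by
  have h := congrArg (Polynomial.eval y) (identityII n)
  simp only [Polynomial.eval_add, Polynomial.eval_mul, Polynomial.eval_natCast,
    Polynomial.eval_X] at h
  rw [legendre_eq, legendre_eq, Polynomial.derivative_smul, Polynomial.derivative_smul,
    Polynomial.eval_smul, Polynomial.eval_smul, Polynomial.eval_smul, smul_eq_mul,
    smul_eq_mul, smul_eq_mul, a_rel n]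
  push_cast at h ⊢
  linear_combination ((1 / (2 ^ (n+1) * (n+1).factorial) : ℝ)) * h

lemma evalIII (n : ℕ) (y : ℝ) :
    (D (legendre (n+2))).eval y
      = (D (legendre n)).eval y + (2*n+3) * (legendre (n+1)).eval y := by
  have h1 := evalI (n+1) y
  have h2 := evalII n y
  push_cast at h1 h2 ⊢
  linear_combination h1 + h2

lemma bonnet (n : ℕ) (y : ℝ) :
    (n+2 : ℝ) * (legendre (n+2)).eval y
      = (2*n+3 : ℝ) * y * (legendre (n+1)).eval y - (n+1 : ℝ) * (legendre n).eval y := by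
  set E : Polynomial ℝ := ((n+2 : ℕ) : Polynomial ℝ) * legendre (n+2)
      + ((n+1 : ℕ) : Polynomial ℝ) * legendre n
      - ((2*n+3 : ℕ) : Polynomial ℝ) * (Polynomial.X * legendre (n+1)) with hE
  have hD : D E = 0 := by
    apply Polynomial.funext
    intro r
    have h3 := evalIII n r
    have h2 := evalII n r
    simp only [hE, Polynomial.derivative_add, Polynomial.derivative_sub,
      Polynomial.derivative_mul, Polynomial.derivative_natCast, Polynomial.derivative_X,
      Polynomial.eval_add, Polynomial.eval_sub, Polynomial.eval_mul, Polynomial.eval_natCast,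
      Polynomial.eval_X, Polynomial.eval_zero, Polynomial.eval_one, zero_mul, one_mul]
    push_cast
    push_cast at h3 h2
    linear_combination ((n:ℝ)+2) * h3 - (2*(n:ℝ)+3) * h2
  have hC : E = Polynomial.C (E.coeff 0) :=
    Polynomial.eq_C_of_natDegree_eq_zero (Polynomial.natDegree_eq_zero_of_derivative_eq_zero hD)
  have hE1 : E.eval 1 = 0 := by
    simp only [hE, Polynomial.eval_add, Polynomial.eval_sub, Polynomial.eval_mul,
      Polynomial.eval_natCast, Polynomial.eval_X, legendre_eval_one, mul_one]
    push_cast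
    ring
  have hEy : E.eval y = 0 := by
    rw [hC] at hE1 ⊢
    simpa using hE1
  simp only [hE, Polynomial.eval_add, Polynomial.eval_sub, Polynomial.eval_mul,
    Polynomial.eval_natCast, Polynomial.eval_X] at hEy
  push_cast at hEy
  linarith [hEy]

end MD

lemma MD_subst (n : ℕ) {x : ℝ} (hx0 : 0 < x) (hxπ : x < π) :
    (∫ t in (0:ℝ)..x, Real.cos ((n + 1 / 2) * t) / Real.sqrt (2 * (Real.cos t - Real.cos x)))
      = ∫ φ in (0:ℝ)..(π/2), (MDQ n).eval (Real.sin (x/2)^2 * Real.sin φ^2) := by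
  have hπ : (0:ℝ) < π := Real.pi_pos
  set s : ℝ := Real.sin (x/2) with hs
  have hx2 : 0 < x/2 := by linarith
  have hx2' : x/2 < π/2 := by linarith
  have hs0 : 0 < s := Real.sin_pos_of_pos_of_lt_pi hx2 (by linarith)
  have hs1 : s < 1 := by
    have := Real.strictMonoOn_sin (a := x/2) (b := π/2)
      ⟨by linarith, le_of_lt hx2'⟩ ⟨by linarith, le_refl _⟩ hx2'
    simpa using this
  set f : ℝ → ℝ := fun φ => 2 * Real.arcsin (s * Real.sin φ) with hf
  set f' : ℝ → ℝ := fun φ => 2 * s * Real.cos φ / Real.sqrt (1 - (s * Real.sin φ)^2) with hf'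
  set g : ℝ → ℝ := fun t => Real.cos ((n + 1 / 2) * t) / Real.sqrt (2 * (Real.cos t - Real.cos x))
    with hg
  -- basic facts on Ioo 0 (π/2)
  have hmem : ∀ φ ∈ Ioo (0:ℝ) (π/2),
      0 < Real.sin φ ∧ Real.sin φ < 1 ∧ 0 < Real.cos φ ∧ s * Real.sin φ < 1 ∧
        0 < s * Real.sin φ := by
    intro φ hφ
    have h1 : 0 < Real.sin φ := Real.sin_pos_of_pos_of_lt_pi hφ.1 (by linarith [hφ.2])
    have h2 : Real.sin φ < 1 := by
      have := Real.strictMonoOn_sin (a := φ) (b := π/2)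
        ⟨by linarith [hφ.1], by linarith [hφ.2]⟩ ⟨by linarith, le_refl _⟩ hφ.2
      simpa using this
    have h3 : 0 < Real.cos φ := Real.cos_pos_of_mem_Ioo ⟨by linarith [hφ.1], hφ.2⟩
    refine ⟨h1, h2, h3, ?_, by positivity⟩
    nlinarith
  -- derivative
  have hderiv : ∀ φ ∈ Ioo (0:ℝ) (π/2), HasDerivWithinAt f (f' φ) (Ioo (0:ℝ) (π/2)) φ := by
    intro φ hφ
    obtain ⟨h1, h2, h3, h4, h5⟩ := hmem φ hφ
    have hinner : HasDerivAt (fun φ => s * Real.sin φ) (s * Real.cos φ) φ :=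
      (Real.hasDerivAt_sin φ).const_mul s
    have harc : HasDerivAt Real.arcsin (1 / Real.sqrt (1 - (s * Real.sin φ)^2))
        (s * Real.sin φ) :=
      Real.hasDerivAt_arcsin (by nlinarith) (by linarith)
    have := (harc.comp φ hinner).const_mul (2:ℝ)
    have heq : 2 * (1 / Real.sqrt (1 - (s * Real.sin φ)^2) * (s * Real.cos φ)) = f' φ := by
      rw [hf']; ring
    rw [heq] at this
    exact this.hasDerivWithinAt
  -- injectivity
  have hinj : InjOn f (Ioo (0:ℝ) (π/2)) := by
    intro a ha b hb hab
    obtain ⟨ha1, ha2, -, ha4, ha5⟩ := hmem a ha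
    obtain ⟨hb1, hb2, -, hb4, hb5⟩ := hmem b hb
    have h1 : Real.arcsin (s * Real.sin a) = Real.arcsin (s * Real.sin b) := by
      rw [hf] at hab; simp only [] at hab; linarith
    have h2 : s * Real.sin a = s * Real.sin b :=
      Real.injOn_arcsin ⟨by linarith, le_of_lt ha4⟩ ⟨by linarith, le_of_lt hb4⟩ h1
    have h3 : Real.sin a = Real.sin b := by
      exact mul_left_cancel₀ (ne_of_gt hs0) h2
    exact Real.injOn_sin ⟨by linarith [ha.1], by linarith [ha.2]⟩
      ⟨by linarith [hb.1], by linarith [hb.2]⟩ h3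
  -- image
  have himg : f '' Ioo (0:ℝ) (π/2) = Ioo (0:ℝ) x := by
    apply Subset.antisymm
    · rintro - ⟨φ, hφ, rfl⟩
      obtain ⟨h1, h2, h3, h4, h5⟩ := hmem φ hφ
      constructor
      · have := Real.arcsin_pos.mpr h5
        simp only [hf]; linarith
      · have harc : Real.arcsin (s * Real.sin φ) < Real.arcsin s := by
          apply Real.strictMonoOn_arcsin ⟨by linarith, le_of_lt h4⟩ ⟨by linarith, le_of_lt hs1⟩
          nlinarith
        have : Real.arcsin s = x/2 := by
          rw [hs]; exact Real.arcsin_sin (by linarith) (by linarith)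
        simp only [hf]; linarith
    · have hcont : ContinuousOn f (Icc (0:ℝ) (π/2)) :=
        (continuous_const.mul (Real.continuous_arcsin.comp
          (continuous_const.mul Real.continuous_sin))).continuousOn
      have h0 : f 0 = 0 := by simp [hf]
      have hπ2 : f (π/2) = x := by
        simp only [hf, Real.sin_pi_div_two, mul_one, hs]
        rw [Real.arcsin_sin (by linarith) (by linarith)]
        ring
      have := intermediate_value_Ioo (le_of_lt (by linarith : (0:ℝ) < π/2)) hcont
      rw [h0, hπ2] at this
      exact this
  -- key substitution
  have key := MeasureTheory.integral_image_eq_integral_abs_deriv_smul measurableSet_Ioo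
    hderiv hinj g
  rw [himg] at key
  -- pointwise identification
  have hpt : ∀ φ ∈ Ioo (0:ℝ) (π/2),
      |f' φ| • g (f φ) = (MDQ n).eval (s^2 * Real.sin φ^2) := by
    intro φ hφ
    obtain ⟨h1, h2, h3, h4, h5⟩ := hmem φ hφ
    have hss : 0 < 1 - (s * Real.sin φ)^2 := by nlinarith
    set θ : ℝ := Real.arcsin (s * Real.sin φ) with hθ
    have hsinθ : Real.sin θ = s * Real.sin φ := Real.sin_arcsin (by linarith) (by linarith)
    have hcosθ : Real.cos θ = Real.sqrt (1 - (s * Real.sin φ)^2) := by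
      rw [hθ, Real.cos_arcsin]
    have hcosθ0 : 0 < Real.cos θ := by rw [hcosθ]; exact Real.sqrt_pos.mpr hss
    have hfφ : f φ = 2 * θ := rfl
    -- cos x = 1 - 2 s^2
    have hcx : Real.cos x = 1 - 2 * s^2 := by
      have hc2 := Real.cos_two_mul (x/2)
      rw [show 2*(x/2) = x by ring] at hc2
      have hpy2 := Real.sin_sq_add_cos_sq (x/2)
      rw [hs]
      nlinarith [hc2, hpy2]
    have hcf : Real.cos (f φ) = 1 - 2 * (s^2 * Real.sin φ^2) := by
      rw [hfφ, Real.cos_two_mul]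
      have hpy := Real.sin_sq_add_cos_sq θ
      nlinarith [hsinθ]
    have hsq : 2 * (Real.cos (f φ) - Real.cos x) = (2 * s * Real.cos φ)^2 := by
      rw [hcf, hcx]
      have := Real.sin_sq_add_cos_sq φ
      nlinarith
    have hsqrt : Real.sqrt (2 * (Real.cos (f φ) - Real.cos x)) = 2 * s * Real.cos φ := by
      rw [hsq]
      exact Real.sqrt_sq (by positivity)
    have hang : ((n:ℝ) + 1/2) * f φ = (2 * (n:ℝ) + 1) * θ := by rw [hfφ]; ring
    have hcosn : Real.cos (((n:ℝ) + 1/2) * f φ)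
        = Real.cos θ * (MDQ n).eval (s^2 * Real.sin φ^2) := by
      rw [hang, cos_eq_MDQ n θ]
      congr 2
      rw [hsinθ]; ring
    have hfp : |f' φ| = 2 * s * Real.cos φ / Real.cos θ := by
      rw [hf', hcosθ]
      rw [abs_of_pos]
      positivity
    rw [hg]
    simp only [smul_eq_mul]
    rw [hcosn, hsqrt, hfp]
    field_simp
  -- assemble
  rw [intervalIntegral.integral_of_le (le_of_lt hx0),
    intervalIntegral.integral_of_le (le_of_lt (by linarith : (0:ℝ) < π/2))]
  rw [MeasureTheory.integral_Ioc_eq_integral_Ioo, MeasureTheory.integral_Ioc_eq_integral_Ioo]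
  rw [key]
  exact MeasureTheory.setIntegral_congr_fun measurableSet_Ioo hpt


lemma MD_cont (p : Polynomial ℝ) (c : ℝ) :
    Continuous (fun φ : ℝ => p.eval (c * Real.sin φ^2)) :=
  (Polynomial.continuous p).comp (continuous_const.mul (Real.continuous_sin.pow 2))

lemma MD_ii (p : Polynomial ℝ) (c : ℝ) :
    IntervalIntegrable (fun φ : ℝ => p.eval (c * Real.sin φ^2)) volume 0 (π/2) :=
  (MD_cont p c).intervalIntegrable _ _

lemma MD_star (m : ℕ) (c : ℝ) :
    (∫ φ in (0:ℝ)..(π/2),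
      ((2*(m:ℝ)+1) * (1 - Real.sin φ^2) * (MDQ m).eval (c * Real.sin φ^2)
        - Real.sin φ^2 * (MDS m).eval (c * Real.sin φ^2))) = 0 := by
  set G : ℝ → ℝ := fun φ =>
    (2*(m:ℝ)+1) * (1 - Real.sin φ^2) * (MDQ m).eval (c * Real.sin φ^2)
      - Real.sin φ^2 * (MDS m).eval (c * Real.sin φ^2) with hG
  set F : ℝ → ℝ := fun φ => Real.sin φ * Real.cos φ * (MDS m).eval (c * Real.sin φ^2) with hF
  have hder : ∀ φ ∈ uIcc (0:ℝ) (π/2), HasDerivAt F (G φ) φ := by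
    intro φ _
    have h1 : HasDerivAt (fun φ : ℝ => Real.sin φ * Real.cos φ)
        (Real.cos φ * Real.cos φ + Real.sin φ * (-Real.sin φ)) φ :=
      (Real.hasDerivAt_sin φ).mul (Real.hasDerivAt_cos φ)
    have hin : HasDerivAt (fun φ : ℝ => c * Real.sin φ^2)
        (c * (2 * Real.sin φ * Real.cos φ)) φ := by
      have := ((Real.hasDerivAt_sin φ).pow 2).const_mul c
      refine this.congr_deriv ?_
      push_cast
      ring
    have h2 : HasDerivAt (fun φ : ℝ => (MDS m).eval (c * Real.sin φ^2))
        ((Polynomial.derivative (MDS m)).eval (c * Real.sin φ^2)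
          * (c * (2 * Real.sin φ * Real.cos φ))) φ :=
      (Polynomial.hasDerivAt (MDS m) _).comp φ hin
    have h3 := h1.mul h2
    refine h3.congr_deriv (Eq.symm ?_)
    have hB := MD_idB m (c * Real.sin φ^2)
    have hpy := Real.sin_sq_add_cos_sq φ
    rw [hG]
    simp only []
    linear_combination (-(Real.cos φ^2)) * hB
      - (2*(m:ℝ)+1) * (MDQ m).eval (c * Real.sin φ^2) * hpy
  have hcont : Continuous G := by
    apply Continuous.sub
    · exact (continuous_const.mul ((continuous_const.sub (Real.continuous_sin.pow 2)))).mul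
        (MD_cont (MDQ m) c)
    · exact (Real.continuous_sin.pow 2).mul (MD_cont (MDS m) c)
  have := intervalIntegral.integral_eq_sub_of_hasDerivAt hder
    (hcont.intervalIntegrable _ _)
  rw [this]
  rw [hF]
  simp [Real.cos_pi_div_two]

noncomputable def MDJ (c : ℝ) (m : ℕ) : ℝ :=
  ∫ φ in (0:ℝ)..(π/2), (MDQ m).eval (c * Real.sin φ^2)

lemma MDJ_rec (m : ℕ) (c : ℝ) :
    ((m:ℝ)+2) * MDJ c (m+2)
      = (2*(m:ℝ)+3) * (1-2*c) * MDJ c (m+1) - ((m:ℝ)+1) * MDJ c m := by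
  have hpt : ∀ φ : ℝ,
      ((m:ℝ)+2) * (MDQ (m+2)).eval (c * Real.sin φ^2)
        - (2*(m:ℝ)+3) * (1-2*c) * (MDQ (m+1)).eval (c * Real.sin φ^2)
        + ((m:ℝ)+1) * (MDQ m).eval (c * Real.sin φ^2)
      = 2*c * ((2*((m:ℝ)+1)+1) * (1 - Real.sin φ^2) * (MDQ (m+1)).eval (c * Real.sin φ^2)
          - Real.sin φ^2 * (MDS (m+1)).eval (c * Real.sin φ^2)) := by
    intro φ
    have e1 := MDQ_eval m (c * Real.sin φ^2)
    have e2 := MD_idA m (c * Real.sin φ^2)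
    linear_combination ((m:ℝ)+2) * e1 - e2
  have hL : (∫ φ in (0:ℝ)..(π/2),
      (((m:ℝ)+2) * (MDQ (m+2)).eval (c * Real.sin φ^2)
        - (2*(m:ℝ)+3) * (1-2*c) * (MDQ (m+1)).eval (c * Real.sin φ^2)
        + ((m:ℝ)+1) * (MDQ m).eval (c * Real.sin φ^2)))
      = ((m:ℝ)+2) * MDJ c (m+2) - (2*(m:ℝ)+3) * (1-2*c) * MDJ c (m+1)
          + ((m:ℝ)+1) * MDJ c m := by
    rw [intervalIntegral.integral_add (((MD_ii (MDQ (m+2)) c).const_mul _).sub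
        ((MD_ii (MDQ (m+1)) c).const_mul _)) ((MD_ii (MDQ m) c).const_mul _),
      intervalIntegral.integral_sub ((MD_ii (MDQ (m+2)) c).const_mul _)
        ((MD_ii (MDQ (m+1)) c).const_mul _),
      intervalIntegral.integral_const_mul, intervalIntegral.integral_const_mul,
      intervalIntegral.integral_const_mul]
    rfl
  have hR : (∫ φ in (0:ℝ)..(π/2),
      (((m:ℝ)+2) * (MDQ (m+2)).eval (c * Real.sin φ^2)
        - (2*(m:ℝ)+3) * (1-2*c) * (MDQ (m+1)).eval (c * Real.sin φ^2)
        + ((m:ℝ)+1) * (MDQ m).eval (c * Real.sin φ^2))) = 0 := by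
    rw [intervalIntegral.integral_congr (g := fun φ =>
      2*c * ((2*((m:ℝ)+1)+1) * (1 - Real.sin φ^2) * (MDQ (m+1)).eval (c * Real.sin φ^2)
          - Real.sin φ^2 * (MDS (m+1)).eval (c * Real.sin φ^2)))
      (fun φ _ => hpt φ)]
    rw [intervalIntegral.integral_const_mul]
    have := MD_star (m+1) c
    push_cast at this ⊢
    rw [this]
    ring
  rw [hL] at hR
  linarith

lemma MDJ_zero (c : ℝ) : MDJ c 0 = π/2 := by
  rw [MDJ]
  simp [MDQ]

lemma MDJ_one (c : ℝ) : MDJ c 1 = π/2 - π*c := by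
  rw [MDJ]
  have : ∀ φ : ℝ, (MDQ 1).eval (c * Real.sin φ^2) = 1 - 4*c*Real.sin φ^2 := by
    intro φ; simp [MDQ]; ring
  rw [intervalIntegral.integral_congr (g := fun φ => 1 - 4*c*Real.sin φ^2) (fun φ _ => this φ)]
  rw [intervalIntegral.integral_sub (f := fun _ => (1:ℝ)) (g := fun φ => 4*c*Real.sin φ^2)
    intervalIntegrable_const
    ((continuous_const.mul (Real.continuous_sin.pow 2)).intervalIntegrable _ _)]
  have h4 : (∫ φ in (0:ℝ)..(π/2), 4*c*Real.sin φ^2)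
      = 4*c * ∫ φ in (0:ℝ)..(π/2), Real.sin φ^2 := by
    rw [← intervalIntegral.integral_const_mul]
  rw [h4, integral_sin_sq]
  simp [Real.cos_pi_div_two]
  ring

theorem mehler_dirichlet (n : ℕ) (hn : 1 ≤ n) (x : ℝ) (hx : x ∈ Set.Ioo 0 π) :
    (legendre n).eval (Real.cos x) =
      (2 / π) * ∫ t in (0 : ℝ)..x,
        Real.cos ((n + 1 / 2) * t) / Real.sqrt (2 * (Real.cos t - Real.cos x)) := by
  obtain ⟨hx0, hxπ⟩ := hx
  have hπ : (0:ℝ) < π := Real.pi_pos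
  set c : ℝ := Real.sin (x/2)^2 with hc
  have hcx : Real.cos x = 1 - 2*c := by
    have hc2 := Real.cos_two_mul (x/2)
    rw [show 2*(x/2) = x by ring] at hc2
    have hpy2 := Real.sin_sq_add_cos_sq (x/2)
    rw [hc]
    nlinarith [hc2, hpy2]
  have main : ∀ m : ℕ, (legendre m).eval (Real.cos x) = (2/π) * MDJ c m := by
    intro m
    induction m using Nat.twoStepInduction with
    | zero =>
      rw [MDJ_zero]
      have h0 : (legendre 0).eval (Real.cos x) = 1 := by simp [legendre]
      rw [h0]
      field_simp
    | one =>
      rw [MDJ_one]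
      have h1 : (legendre 1).eval (Real.cos x) = Real.cos x := by
        simp [legendre, Polynomial.derivative_sub]; ring
      rw [h1, hcx]
      field_simp
    | more m ihn ihn1 =>
      have hb := MD.bonnet m (Real.cos x)
      have hb' : ((m:ℝ)+2) * (legendre (m+2)).eval (Real.cos x)
          = (2*(m:ℝ)+3) * (1-2*c) * (legendre (m+1)).eval (Real.cos x)
            - ((m:ℝ)+1) * (legendre m).eval (Real.cos x) := by
        linear_combination hb + (2*(m:ℝ)+3) * (legendre (m+1)).eval (Real.cos x) * hcx
      have hr := MDJ_rec m c
      have h2 : ((m:ℝ)+2) ≠ 0 := by positivity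
      have key : ((m:ℝ)+2) * (legendre (m+2)).eval (Real.cos x)
          = ((m:ℝ)+2) * ((2/π) * MDJ c (m+2)) := by
        linear_combination hb' + (2*(m:ℝ)+3) * (1-2*c) * ihn1 - ((m:ℝ)+1) * ihn
          - (2/π) * hr
      exact mul_left_cancel₀ h2 key
  rw [MD_subst n hx0 hxπ]
  exact main n
end

section
/- Let f(x) = |x|^{3/2} on [−1,1] and α = 3/2. Then its Legendre coefficients c_n = (n+1/2) ∫_{−1}^1 f(x) P_n(x) dx satisfy: c_n = 0 for n odd; c_0 = 1/(α+1) = 2/5; and for even n ≥ 2, c_n = (2n+1) · [α(α−2)(α−4)⋯(α−n+2)] / [(α+1)(α+3)⋯(α+n+1)]. -/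
open MeasureTheory Real Finset

/-!
Since `P_n(-x) = (-1)^n P_n(x)`, the coefficients reduce to the moments `M_n = ∫₀¹ x^α P_n(x) dx`,
and the computation works for every `α > 0`. Integrating the Rodrigues-formula identities
`P'_{n+1} = x P'_n + (n+1) P_n` and `P'_{n+2} - P'_n = (2n+3) P_{n+1}` by parts against `x^α`
(the boundary terms are `P_n(1) = 1` at `1` and vanish at `0`) gives
`α ∫₀¹ x^(α-1) P_{n+1} = (α - n) M_n` and `(2n+3) M_{n+1} = -α ∫₀¹ x^(α-1) (P_{n+2} - P_n)`.
Eliminating the `(α-1)`-moments leaves `(α+n+3) M_{n+2} = (α-n) M_n`, which telescopes from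
`M_0 = 1/(α+1)` to the product formula.
-/

open Polynomial
open scoped Nat

theorem Polynomial.iterate_derivative_comp_neg_X {R : Type*} [CommRing R] (p : R[X]) (k : ℕ) :
    derivative^[k] (p.comp (-X)) = (-1) ^ k * (derivative^[k] p).comp (-X) := by
  induction k generalizing p with
  | zero => simp
  | succ k ih => simp [ih (derivative p), derivative_comp, pow_succ]

theorem derivative_X_sq_sub_one_pow_succ (n : ℕ) :
    derivative (((X : ℝ[X]) ^ 2 - 1) ^ (n + 1)) =
      C (2 * (n + 1) : ℝ) * ((X ^ 2 - 1) ^ n * X) := by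
  rw [derivative_pow]
  simp only [derivative_sub, derivative_X_pow, derivative_one, map_mul, map_add, map_natCast,
    map_one, map_ofNat]
  push_cast
  ring

noncomputable def rodrigues (n : ℕ) : ℝ[X] := derivative^[n] ((X ^ 2 - 1) ^ n)

theorem legendre_eq_C_mul_rodrigues (n : ℕ) :
    legendre n = C (2 ^ n * n ! : ℝ)⁻¹ * rodrigues n := by
  rw [legendre, smul_eq_C_mul, one_div, rodrigues]

theorem derivative_rodrigues (n : ℕ) :
    derivative (rodrigues n) = derivative^[n] (derivative ((X ^ 2 - 1) ^ n)) := by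
  rw [rodrigues, ← Function.iterate_succ_apply' derivative, Function.iterate_succ_apply]

theorem derivative_rodrigues_succ (n : ℕ) :
    derivative (rodrigues (n + 1)) =
      C (2 * (n + 1) : ℝ) * (derivative (rodrigues n) * X + C ((n : ℝ) + 1) * rodrigues n) := by
  rw [derivative_rodrigues, derivative_X_sq_sub_one_pow_succ, iterate_derivative_C_mul,
    iterate_derivative_mul_X, add_tsub_cancel_right, Function.iterate_succ_apply', ← rodrigues]
  simp only [nsmul_eq_mul, map_add, map_natCast, map_one]
  push_cast
  ring

theorem derivative_sq_X_sq_sub_one_pow_add_two (n : ℕ) :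
    derivative (derivative (((X : ℝ[X]) ^ 2 - 1) ^ (n + 2))) =
      C (2 * (n + 2) : ℝ) *
        (C (2 * n + 3 : ℝ) * (X ^ 2 - 1) ^ (n + 1) + C (2 * (n + 1) : ℝ) * (X ^ 2 - 1) ^ n) := by
  rw [derivative_X_sq_sub_one_pow_succ, derivative_C_mul, derivative_mul,
    derivative_X_sq_sub_one_pow_succ]
  simp only [derivative_X, map_mul, map_add, map_natCast, map_one, map_ofNat]
  push_cast
  ring

theorem derivative_rodrigues_add_two (n : ℕ) :
    derivative (rodrigues (n + 2)) = C (2 * (n + 2) : ℝ) *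
      (C (2 * n + 3 : ℝ) * rodrigues (n + 1) + C (2 * (n + 1) : ℝ) * derivative (rodrigues n)) := by
  rw [derivative_rodrigues, Function.iterate_succ_apply, derivative_sq_X_sq_sub_one_pow_add_two,
    iterate_derivative_C_mul, iterate_map_add, iterate_derivative_C_mul, iterate_derivative_C_mul]
  simp only [rodrigues, Function.iterate_succ_apply']

theorem inv_two_pow_mul_factorial_succ_mul (n : ℕ) :
    ((2 : ℝ) ^ (n + 1) * (n + 1)!)⁻¹ * (2 * (n + 1)) = ((2 : ℝ) ^ n * n !)⁻¹ := by
  push_cast [Nat.factorial_succ]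
  field_simp
  ring

theorem derivative_legendre_succ (n : ℕ) :
    derivative (legendre (n + 1)) =
      X * derivative (legendre n) + C ((n : ℝ) + 1) * legendre n := by
  have hscale := congrArg C (inv_two_pow_mul_factorial_succ_mul n)
  rw [map_mul] at hscale
  simp only [legendre_eq_C_mul_rodrigues, derivative_C_mul, derivative_rodrigues_succ]
  linear_combination (derivative (rodrigues n) * X + C ((n : ℝ) + 1) * rodrigues n) * hscale

theorem derivative_legendre_add_two_sub (n : ℕ) :
    derivative (legendre (n + 2)) - derivative (legendre n) =
      C (2 * n + 3 : ℝ) * legendre (n + 1) := by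
  have hscale₁ : C ((2 : ℝ) ^ (n + 2) * (n + 2)!)⁻¹ * C (2 * (n + 2) : ℝ) =
      C ((2 : ℝ) ^ (n + 1) * (n + 1)!)⁻¹ := by
    rw [← C_mul, ← inv_two_pow_mul_factorial_succ_mul (n + 1)]
    push_cast
    ring_nf
  have hscale₀ := congrArg C (inv_two_pow_mul_factorial_succ_mul n)
  rw [map_mul] at hscale₀
  simp only [legendre_eq_C_mul_rodrigues, derivative_C_mul, derivative_rodrigues_add_two]
  linear_combination (C (2 * n + 3 : ℝ) * rodrigues (n + 1) +
    C (2 * (n + 1) : ℝ) * derivative (rodrigues n)) * hscale₁ + derivative (rodrigues n) * hscale₀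

theorem legendre_zero : legendre 0 = 1 := by
  simp [legendre]

-- `P'_n(1)` is unknown, but it cancels between the two derivative identities evaluated at `1`.
theorem legendre_eval_one_succ (n : ℕ) : (legendre (n + 1)).eval 1 = (legendre n).eval 1 := by
  have h₀ := congrArg (eval 1) (derivative_legendre_succ n)
  have h₁ := congrArg (eval 1) (derivative_legendre_succ (n + 1))
  have h₂ := congrArg (eval 1) (derivative_legendre_add_two_sub n)
  simp only [eval_add, eval_sub, eval_mul, eval_X, eval_C, one_mul] at h₀ h₁ h₂
  push_cast at h₁
  have hn : (n : ℝ) + 1 ≠ 0 := by positivity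
  refine mul_left_cancel₀ hn ?_
  linear_combination h₀ + h₁ - h₂

theorem legendre_eval_one (n : ℕ) : (legendre n).eval 1 = 1 := by
  induction n with
  | zero => simp [legendre_zero]
  | succ n ih => rw [legendre_eval_one_succ, ih]

theorem rodrigues_comp_neg_X (n : ℕ) : (rodrigues n).comp (-X) = C ((-1) ^ n) * rodrigues n := by
  have h := iterate_derivative_comp_neg_X (((X : ℝ[X]) ^ 2 - 1) ^ n) n
  simp only [sub_comp, pow_comp, X_comp, neg_sq, one_comp] at h
  rw [rodrigues]
  conv_rhs => rw [h]
  rw [C_pow, C_neg, C_1, ← mul_assoc, ← mul_pow]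
  simp

theorem legendre_comp_neg_X (n : ℕ) : (legendre n).comp (-X) = C ((-1) ^ n) * legendre n := by
  rw [legendre_eq_C_mul_rodrigues, mul_comp, C_comp, rodrigues_comp_neg_X]
  ring

noncomputable def rpowMoment (α : ℝ) (p : ℝ[X]) : ℝ := ∫ x in (0 : ℝ)..1, x ^ α * p.eval x

section rpowMoment

variable {α : ℝ}

theorem intervalIntegrable_rpow_mul_eval (hα : -1 < α) (p : ℝ[X]) :
    IntervalIntegrable (fun x => x ^ α * p.eval x) volume 0 1 :=
  (intervalIntegral.intervalIntegrable_rpow' hα).mul_continuousOn p.continuous.continuousOn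

theorem rpowMoment_add (hα : -1 < α) (p q : ℝ[X]) :
    rpowMoment α (p + q) = rpowMoment α p + rpowMoment α q := by
  simp only [rpowMoment, eval_add, mul_add]
  exact intervalIntegral.integral_add (intervalIntegrable_rpow_mul_eval hα p)
    (intervalIntegrable_rpow_mul_eval hα q)

theorem rpowMoment_sub (hα : -1 < α) (p q : ℝ[X]) :
    rpowMoment α (p - q) = rpowMoment α p - rpowMoment α q := by
  simp only [rpowMoment, eval_sub, mul_sub]
  exact intervalIntegral.integral_sub (intervalIntegrable_rpow_mul_eval hα p)
    (intervalIntegrable_rpow_mul_eval hα q)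

theorem rpowMoment_C_mul (a : ℝ) (p : ℝ[X]) : rpowMoment α (C a * p) = a * rpowMoment α p := by
  simp only [rpowMoment, eval_mul, eval_C, mul_left_comm _ a, intervalIntegral.integral_const_mul]

theorem rpowMoment_X_mul (hα : -1 < α) (p : ℝ[X]) :
    rpowMoment α (X * p) = rpowMoment (α + 1) p := by
  refine intervalIntegral.integral_congr fun x hx => ?_
  have hx₀ : 0 ≤ x := by
    rw [Set.uIcc_of_le zero_le_one] at hx
    exact hx.1
  simp only [eval_mul, eval_X]
  rw [rpow_add_one' hx₀ (by linarith)]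
  ring

theorem rpowMoment_one (hα : -1 < α) : rpowMoment α 1 = 1 / (α + 1) := by
  simp [rpowMoment, integral_rpow (Or.inl hα), zero_rpow (by linarith : α + 1 ≠ 0)]

theorem rpowMoment_derivative (hα : 0 < α) (p : ℝ[X]) :
    rpowMoment α (derivative p) = p.eval 1 - α * rpowMoment (α - 1) p := by
  have hibp := intervalIntegral.integral_mul_deriv_eq_deriv_mul_of_hasDerivAt
    (a := 0) (b := 1) (u := fun x => x ^ α) (u' := fun x => α * x ^ (α - 1))
    (continuous_rpow_const hα.le).continuousOn p.continuous.continuousOn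
    (fun x hx => hasDerivAt_rpow_const (Or.inl (by norm_num at hx; exact hx.1.ne')))
    (fun x _ => p.hasDerivAt x)
    ((intervalIntegral.intervalIntegrable_rpow' (by linarith)).const_mul α)
    ((derivative p).continuous.intervalIntegrable 0 1)
  simp only [mul_assoc, intervalIntegral.integral_const_mul] at hibp
  simpa [rpowMoment, zero_rpow hα.ne'] using hibp

end rpowMoment

section LegendreMoments

variable {α : ℝ}

theorem rpowMoment_sub_one_legendre_succ (hα : 0 < α) (n : ℕ) :
    α * rpowMoment (α - 1) (legendre (n + 1)) = (α - n) * rpowMoment α (legendre n) := by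
  have h := congrArg (rpowMoment α) (derivative_legendre_succ n)
  rw [rpowMoment_add (by linarith), rpowMoment_X_mul (by linarith), rpowMoment_C_mul,
    rpowMoment_derivative hα, rpowMoment_derivative (by linarith), add_sub_cancel_right,
    legendre_eval_one, legendre_eval_one] at h
  linear_combination -h

theorem rpowMoment_legendre_add_two (hα : 0 < α) (n : ℕ) :
    (α + n + 3) * rpowMoment α (legendre (n + 2)) = (α - n) * rpowMoment α (legendre n) := by
  have h := congrArg (rpowMoment α) (derivative_legendre_add_two_sub (n + 1))
  rw [rpowMoment_sub (by linarith), rpowMoment_derivative hα, rpowMoment_derivative hα,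
    rpowMoment_C_mul, legendre_eval_one, legendre_eval_one] at h
  have h₃ := rpowMoment_sub_one_legendre_succ hα (n + 2)
  have h₁ := rpowMoment_sub_one_legendre_succ hα n
  push_cast at h h₃
  linear_combination h₁ - h - h₃

theorem rpowMoment_legendre_two_mul (hα : 0 < α) (j : ℕ) :
    rpowMoment α (legendre (2 * j)) =
      (∏ k ∈ range j, (α - 2 * k)) / ∏ k ∈ range (j + 1), (α + 2 * k + 1) := by
  induction j with
  | zero => simp [legendre_zero, rpowMoment_one (by linarith : -1 < α)]
  | succ j ih =>
    have h := rpowMoment_legendre_add_two hα (2 * j)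
    push_cast at h
    have hstep : rpowMoment α (legendre (2 * j + 2)) =
        (α - 2 * j) / (α + 2 * j + 3) * rpowMoment α (legendre (2 * j)) := by
      field_simp
      linear_combination h
    rw [mul_add_one, hstep, ih, prod_range_succ (fun k : ℕ => α - 2 * k),
      prod_range_succ (fun k : ℕ => α + 2 * k + 1) (j + 1)]
    push_cast
    field_simp
    ring

end LegendreMoments

theorem integral_abs_rpow_mul_eval {α : ℝ} (hα : 0 ≤ α) (p : ℝ[X]) :
    ∫ x in (-1 : ℝ)..1, |x| ^ α * p.eval x = rpowMoment α (p.comp (-X)) + rpowMoment α p := by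
  have hcont : Continuous fun x : ℝ => |x| ^ α * p.eval x :=
    ((continuous_rpow_const hα).comp continuous_abs).mul p.continuous
  have hmoment (q : ℝ[X]) : ∫ x in (0 : ℝ)..1, |x| ^ α * q.eval x = rpowMoment α q := by
    refine intervalIntegral.integral_congr fun x hx => ?_
    rw [Set.uIcc_of_le zero_le_one] at hx
    simp only [abs_of_nonneg hx.1]
  rw [← intervalIntegral.integral_add_adjacent_intervals (hcont.intervalIntegrable (-1) 0)
    (hcont.intervalIntegrable 0 1), ← hmoment, ← hmoment]
  congr 1
  simpa using (intervalIntegral.integral_comp_neg (a := 0) (b := 1)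
    fun x : ℝ => |x| ^ α * p.eval x).symm

theorem legendre_coeffs_abs_rpow
    (α : ℝ) (hα : α = 3 / 2)
    (c : ℕ → ℝ)
    (hc : ∀ n, c n = (n + 1 / 2) *
      ∫ x in (-1 : ℝ)..1, |x| ^ α * (legendre n).eval x) :
    (∀ n, Odd n → c n = 0) ∧
    c 0 = 1 / (α + 1) ∧
    (∀ n, Even n → 2 ≤ n →
      c n = (2 * n + 1) * (∏ k ∈ Finset.range (n / 2), (α - 2 * k)) /
        (∏ k ∈ Finset.range (n / 2 + 1), (α + 2 * k + 1))) := by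
  have hα₀ : 0 < α := by norm_num [hα]
  have hc' (n : ℕ) : c n = (n + 1 / 2) * ((1 + (-1) ^ n) * rpowMoment α (legendre n)) := by
    rw [hc, integral_abs_rpow_mul_eval hα₀.le, legendre_comp_neg_X, rpowMoment_C_mul]
    ring
  refine ⟨fun n hn => ?_, ?_, fun n hn _ => ?_⟩
  · rw [hc', hn.neg_one_pow]
    ring
  · rw [hc', legendre_zero, rpowMoment_one (by linarith)]
    ring
  · obtain ⟨j, rfl⟩ := hn
    rw [hc', ← two_mul, Nat.mul_div_cancel_left j two_pos, (even_two_mul j).neg_one_pow,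
      rpowMoment_legendre_two_mul hα₀]
    push_cast
    ring
end

section
/- For every integer n ≥ 0, ∫_0^π dy e^{i(n+1/2)y} ∫_0^y sin x/√(2(cos x − cos y)) dx + e^{iπ} ∫_{−π}^0 dy e^{i(n+1/2)y} ∫_0^y sin x/√(2(cos x − cos y)) dx equals 2πi if n = 0 and 0 otherwise. -/
open MeasureTheory Real

lemma inner_pos {y : ℝ} (h0 : 0 ≤ y) (hπ : y ≤ π) :
    (∫ x in (0 : ℝ)..y, Real.sin x / Real.sqrt (2 * (Real.cos x - Real.cos y)))
      = 2 * Real.sin (y / 2) := by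
  rcases eq_or_lt_of_le h0 with rfl | hy
  · simp
  have hcontg : Continuous (fun x => - Real.sqrt (2 * (Real.cos x - Real.cos y))) := by
    apply Continuous.neg
    exact Real.continuous_sqrt.comp (by continuity)
  have hderiv : ∀ x ∈ Set.Ioo (0 : ℝ) y,
      HasDerivAt (fun x => - Real.sqrt (2 * (Real.cos x - Real.cos y)))
        (Real.sin x / Real.sqrt (2 * (Real.cos x - Real.cos y))) x := by
    intro x hx
    have hcx : Real.cos y < Real.cos x :=
      Real.cos_lt_cos_of_nonneg_of_le_pi hx.1.le hπ hx.2
    have hu : 0 < 2 * (Real.cos x - Real.cos y) := by linarith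
    have h1 : HasDerivAt (fun x => 2 * (Real.cos x - Real.cos y)) (2 * (-Real.sin x)) x := by
      simpa using ((Real.hasDerivAt_cos x).sub_const (Real.cos y)).const_mul 2
    have h2 := ((Real.hasDerivAt_sqrt (ne_of_gt hu)).comp x h1).neg
    have hs : Real.sqrt (2 * (Real.cos x - Real.cos y)) ≠ 0 := (Real.sqrt_pos.mpr hu).ne'
    refine h2.congr_deriv ?_
    field_simp
  have hnonneg : ∀ x ∈ Set.Ioo (0 : ℝ) y,
      0 ≤ Real.sin x / Real.sqrt (2 * (Real.cos x - Real.cos y)) := by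
    intro x hx
    apply div_nonneg _ (Real.sqrt_nonneg _)
    exact Real.sin_nonneg_of_nonneg_of_le_pi hx.1.le (by linarith [hx.2])
  have hint : IntervalIntegrable
      (fun x => Real.sin x / Real.sqrt (2 * (Real.cos x - Real.cos y))) volume 0 y := by
    apply intervalIntegral.intervalIntegrable_deriv_of_nonneg hcontg.continuousOn
    · rwa [min_eq_left h0, max_eq_right h0]
    · rwa [min_eq_left h0, max_eq_right h0]
  rw [intervalIntegral.integral_eq_sub_of_hasDeriv_right_of_le h0 hcontg.continuousOn
      (fun x hx => (hderiv x hx).hasDerivWithinAt) hint]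
  have hsin : 0 ≤ Real.sin (y / 2) :=
    Real.sin_nonneg_of_nonneg_of_le_pi (by linarith) (by linarith [Real.pi_pos])
  have hy2 : Real.cos y = Real.cos (y / 2) ^ 2 - Real.sin (y / 2) ^ 2 := by
    have h2 := Real.cos_two_mul' (y / 2)
    rwa [show (2 : ℝ) * (y / 2) = y by ring] at h2
  have hcos : 2 * (1 - Real.cos y) = (2 * Real.sin (y / 2)) ^ 2 := by
    nlinarith [Real.sin_sq_add_cos_sq (y / 2)]
  have gy : - Real.sqrt (2 * (Real.cos y - Real.cos y)) = 0 := by simp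
  have g0 : - Real.sqrt (2 * (Real.cos 0 - Real.cos y)) = - (2 * Real.sin (y / 2)) := by
    rw [Real.cos_zero, hcos, Real.sqrt_sq (by linarith)]
  rw [gy, g0]
  ring

lemma inner_neg {y : ℝ} (h0 : y ≤ 0) (hπ : -π ≤ y) :
    (∫ x in (0 : ℝ)..y, Real.sin x / Real.sqrt (2 * (Real.cos x - Real.cos y)))
      = -(2 * Real.sin (y / 2)) := by
  have h1 := inner_pos (y := -y) (by linarith) (by linarith)
  rw [Real.cos_neg] at h1
  have h2 := intervalIntegral.integral_comp_neg (a := (0 : ℝ)) (b := -y)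
    (fun x => Real.sin x / Real.sqrt (2 * (Real.cos x - Real.cos y)))
  simp only [neg_neg, neg_zero, Real.sin_neg, Real.cos_neg] at h2
  rw [intervalIntegral.integral_symm, ← h2]
  have h3 : (∫ x in (0 : ℝ)..(-y), -Real.sin x / Real.sqrt (2 * (Real.cos x - Real.cos y)))
      = - ∫ x in (0 : ℝ)..(-y), Real.sin x / Real.sqrt (2 * (Real.cos x - Real.cos y)) := by
    rw [← intervalIntegral.integral_neg]
    congr 1
    ext x
    ring
  rw [h3, h1, neg_neg]
  rw [show -y / 2 = -(y / 2) by ring, Real.sin_neg]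
  ring

theorem key_identity_for_constant_one (n : ℕ) :
    (∫ y in (0 : ℝ)..π, Complex.exp (Complex.I * (n + 1 / 2) * y) *
        ((∫ x in (0 : ℝ)..y,
          Real.sin x / Real.sqrt (2 * (Real.cos x - Real.cos y)) : ℝ) : ℂ)) +
      Complex.exp (Complex.I * π) *
        ∫ y in (-π : ℝ)..0, Complex.exp (Complex.I * (n + 1 / 2) * y) *
          ((∫ x in (0 : ℝ)..y,
            Real.sin x / Real.sqrt (2 * (Real.cos x - Real.cos y)) : ℝ) : ℂ) =
      if n = 0 then 2 * π * Complex.I else 0 := by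
  have pi_pos := Real.pi_pos
  have e1 : (∫ y in (0 : ℝ)..π, Complex.exp (Complex.I * (n + 1 / 2) * y) *
        ((∫ x in (0 : ℝ)..y,
          Real.sin x / Real.sqrt (2 * (Real.cos x - Real.cos y)) : ℝ) : ℂ))
      = ∫ y in (0 : ℝ)..π, Complex.exp (Complex.I * (n + 1 / 2) * y)
          * ((2 * Real.sin (y / 2) : ℝ) : ℂ) := by
    apply intervalIntegral.integral_congr
    intro y hy
    rw [Set.uIcc_of_le pi_pos.le] at hy
    dsimp only
    rw [inner_pos hy.1 hy.2]
  have e2 : (∫ y in (-π : ℝ)..0, Complex.exp (Complex.I * (n + 1 / 2) * y) *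
        ((∫ x in (0 : ℝ)..y,
          Real.sin x / Real.sqrt (2 * (Real.cos x - Real.cos y)) : ℝ) : ℂ))
      = ∫ y in (-π : ℝ)..0, Complex.exp (Complex.I * (n + 1 / 2) * y)
          * ((-(2 * Real.sin (y / 2)) : ℝ) : ℂ) := by
    apply intervalIntegral.integral_congr
    intro y hy
    rw [Set.uIcc_of_le (by linarith)] at hy
    dsimp only
    rw [inner_neg hy.2 hy.1]
  rw [e1, e2]
  have hexppi : Complex.exp (Complex.I * π) = -1 := by
    rw [mul_comm]; exact Complex.exp_pi_mul_I
  rw [hexppi]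
  have e3 : (-1 : ℂ) * ∫ y in (-π : ℝ)..0, Complex.exp (Complex.I * (n + 1 / 2) * y)
          * ((-(2 * Real.sin (y / 2)) : ℝ) : ℂ)
      = ∫ y in (-π : ℝ)..0, Complex.exp (Complex.I * (n + 1 / 2) * y)
          * ((2 * Real.sin (y / 2) : ℝ) : ℂ) := by
    rw [← intervalIntegral.integral_const_mul]
    congr 1
    ext y
    push_cast
    ring
  rw [add_comm, e3]
  have hcont : Continuous (fun y : ℝ => Complex.exp (Complex.I * (n + 1 / 2) * y)
      * ((2 * Real.sin (y / 2) : ℝ) : ℂ)) := by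
    apply Continuous.mul
    · exact Complex.continuous_exp.comp (by continuity)
    · exact Complex.continuous_ofReal.comp (by continuity)
  rw [intervalIntegral.integral_add_adjacent_intervals
    (hcont.intervalIntegrable (-π) 0) (hcont.intervalIntegrable 0 π)]
  have key : ∀ y : ℝ, Complex.exp (Complex.I * (n + 1 / 2) * y)
      * ((2 * Real.sin (y / 2) : ℝ) : ℂ)
      = Complex.I * (Complex.exp (Complex.I * n * y) - Complex.exp (Complex.I * (n + 1) * y)) := by
    intro y
    push_cast
    rw [Complex.sin]
    have ha : Complex.exp (Complex.I * (↑n + 1 / 2) * ↑y) * Complex.exp (-(↑y / 2) * Complex.I)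
        = Complex.exp (Complex.I * n * y) := by
      rw [← Complex.exp_add]; congr 1; ring
    have hb : Complex.exp (Complex.I * (↑n + 1 / 2) * ↑y) * Complex.exp ((↑y / 2) * Complex.I)
        = Complex.exp (Complex.I * (n + 1) * y) := by
      rw [← Complex.exp_add]; congr 1; ring
    calc Complex.exp (Complex.I * (↑n + 1 / 2) * ↑y) *
          (2 * ((Complex.exp (-(↑y / 2) * Complex.I) - Complex.exp (↑y / 2 * Complex.I)) *
            Complex.I / 2))
        = Complex.I * (Complex.exp (Complex.I * (↑n + 1 / 2) * ↑y)
              * Complex.exp (-(↑y / 2) * Complex.I)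
            - Complex.exp (Complex.I * (↑n + 1 / 2) * ↑y)
              * Complex.exp ((↑y / 2) * Complex.I)) := by ring
      _ = _ := by rw [ha, hb]
  simp only [key]
  have hcA : Continuous (fun y : ℝ => Complex.exp (Complex.I * n * y)) :=
    Complex.continuous_exp.comp (by continuity)
  have hcB : Continuous (fun y : ℝ => Complex.exp (Complex.I * (n + 1) * y)) :=
    Complex.continuous_exp.comp (by continuity)
  rw [intervalIntegral.integral_const_mul, intervalIntegral.integral_sub
    (hcA.intervalIntegrable _ _) (hcB.intervalIntegrable _ _)]
  have hB : (∫ y in (-π : ℝ)..π, Complex.exp (Complex.I * (n + 1) * y)) = 0 := by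
    have hc : (Complex.I * (n + 1)) ≠ 0 := by
      apply mul_ne_zero Complex.I_ne_zero
      have : ((n : ℂ) + 1) = ((n + 1 : ℕ) : ℂ) := by push_cast; ring
      rw [this]
      exact_mod_cast Nat.succ_ne_zero n
    rw [integral_exp_mul_complex hc]
    have : Complex.exp (Complex.I * (↑n + 1) * ↑π) = Complex.exp (Complex.I * (↑n + 1) * ↑(-π)) := by
      rw [Complex.exp_eq_exp_iff_exists_int]
      exact ⟨n + 1, by push_cast; ring⟩
    rw [this, sub_self, zero_div]
  rw [hB, sub_zero]
  rcases eq_or_ne n 0 with rfl | hn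
  · simp only [if_pos rfl, Nat.cast_zero, mul_zero, zero_mul, Complex.exp_zero]
    rw [intervalIntegral.integral_const]
    rw [Complex.real_smul]
    push_cast
    ring
  · rw [if_neg hn]
    have hc : (Complex.I * n) ≠ 0 := by
      apply mul_ne_zero Complex.I_ne_zero
      exact_mod_cast Nat.cast_ne_zero.mpr hn
    rw [integral_exp_mul_complex hc]
    have : Complex.exp (Complex.I * ↑n * ↑π) = Complex.exp (Complex.I * ↑n * ↑(-π)) := by
      rw [Complex.exp_eq_exp_iff_exists_int]
      exact ⟨n, by push_cast; ring⟩
    rw [this, sub_self, zero_div, mul_zero]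
end
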